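/- arXiv:1601.02167 — 7 statements merged into one kernel-verified Lean document; each statement's English description precedes it below -/
import Mathlib

section
/- Let C be a graded module with degree −1 endomorphisms ∂ and δ satisfying ∂² = δ² = ∂δ + δ∂ = 0, let f : C → C be degree 0 with ∂f = f∂, and let H : C → C be degree +1 with ∂H + H∂ = f − 1. Define H_d := H(δH)^d and f_d := Σ_{i=0}^{d} (Hδ)^i f (δH)^{d−i}. Then for every d ≥ 1, ∂H_d + H_d∂ + δH_{d−1} + H_{d−1}δ = f_d. -/
/-- For `H_d := H (δH)^d` and `f_d := ∑_{i=0}^{d} (Hδ)^i f (δH)^{d-i}`, one has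
`∂H_d + H_d∂ + δH_{d-1} + H_{d-1}δ = f_d` for all `d ≥ 1`. -/
theorem stmt_1 {C : Type*} [AddCommGroup C]
    (p δ f H : AddMonoid.End C)
    (hp : p * p = 0) (hδ : δ * δ = 0) (hpδ : p * δ + δ * p = 0)
    (hf : p * f = f * p)
    (hH : p * H + H * p = f - 1) :
    ∀ d : ℕ, 1 ≤ d →
      p * (H * (δ * H) ^ d) + (H * (δ * H) ^ d) * p
        + δ * (H * (δ * H) ^ (d - 1)) + (H * (δ * H) ^ (d - 1)) * δ
      = ∑ i ∈ Finset.range (d + 1), (H * δ) ^ i * f * (δ * H) ^ (d - i) := by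
  have hpH : p * H = f - 1 - H * p := by rw [eq_sub_iff_add_eq]; exact hH
  have hpδ' : p * δ = -(δ * p) := by rw [eq_neg_iff_add_eq_zero]; exact hpδ
  have h1 : ∀ n : ℕ, H * (δ * H) ^ n = (H * δ) ^ n * H := fun n =>
    (SemiconjBy.pow_right (by simp [SemiconjBy, mul_assoc]) n)
  have key : ∀ m : ℕ,
      p * (H * (δ * H) ^ (m + 2)) + (H * (δ * H) ^ (m + 2)) * p
        + δ * (H * (δ * H) ^ (m + 1)) + (H * (δ * H) ^ (m + 1)) * δ
      = (p * (H * (δ * H) ^ (m + 1)) + (H * (δ * H) ^ (m + 1)) * p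
        + δ * (H * (δ * H) ^ m) + (H * (δ * H) ^ m) * δ) * (δ * H)
        + (H * δ) ^ (m + 2) * f := by
    intro m
    have e1 : (H * (δ * H) ^ m) * δ * (δ * H) = 0 := by
      rw [mul_assoc, ← mul_assoc δ δ H, hδ, zero_mul, mul_zero]
    have eδ : H * (δ * H) ^ (m + 1) * δ = (H * δ) ^ (m + 2) := by
      rw [h1, mul_assoc, ← pow_succ]
    have e2 : (H * (δ * H) ^ (m + 1)) * p * (δ * H) =
        H * (δ * H) ^ (m + 2) * p + H * (δ * H) ^ (m + 1) * δ
          - (H * δ) ^ (m + 2) * f := by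
      calc (H * (δ * H) ^ (m + 1)) * p * (δ * H)
          = (H * (δ * H) ^ (m + 1)) * (p * δ) * H := by noncomm_ring
        _ = -((H * (δ * H) ^ (m + 1)) * δ * (p * H)) := by rw [hpδ']; noncomm_ring
        _ = -((H * δ) ^ (m + 2) * (f - 1 - H * p)) := by rw [eδ, hpH]
        _ = H * (δ * H) ^ (m + 2) * p + H * (δ * H) ^ (m + 1) * δ
              - (H * δ) ^ (m + 2) * f := by
            rw [eδ, h1 (m + 2)]; noncomm_ring
    have e3 : p * (H * (δ * H) ^ (m + 1)) * (δ * H) = p * (H * (δ * H) ^ (m + 2)) := by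
      rw [pow_succ (δ*H) (m+1)]; noncomm_ring
    have e4 : δ * (H * (δ * H) ^ m) * (δ * H) = δ * (H * (δ * H) ^ (m + 1)) := by
      rw [pow_succ (δ*H) m]; noncomm_ring
    rw [add_mul, add_mul, add_mul, e1, e2, e3, e4]
    abel
  intro d hd
  induction d, hd using Nat.le_induction with
  | base =>
    simp only [pow_one, Nat.sub_self, pow_zero, mul_one]
    rw [Finset.sum_range_succ, Finset.sum_range_one]
    simp only [pow_zero, pow_one, one_mul, Nat.sub_self, Nat.sub_zero, mul_one]
    have b1 : H * p * (δ * H) = -(H * (δ * f)) + H * δ + H * (δ * H) * p := by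
      calc H * p * (δ * H) = H * (p * δ) * H := by noncomm_ring
        _ = -(H * δ * (p * H)) := by rw [hpδ']; noncomm_ring
        _ = -(H * δ * (f - 1 - H * p)) := by rw [hpH]
        _ = -(H * (δ * f)) + H * δ + H * (δ * H) * p := by noncomm_ring
    rw [show p * (H * (δ * H)) = (p * H) * (δ * H) from by noncomm_ring, hpH,
      sub_mul, sub_mul, b1]
    noncomm_ring
  | succ n hn ih =>
    obtain ⟨m, rfl⟩ : ∃ m, n = m + 1 := ⟨n - 1, (Nat.succ_pred_eq_of_pos hn).symm⟩
    simp only [Nat.add_sub_cancel] at ih ⊢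
    rw [key m, ih]
    rw [Finset.sum_range_succ _ (m + 2), Finset.sum_mul]
    congr 1
    · apply Finset.sum_congr rfl
      intro i hi
      have hi' : i ≤ m + 1 := Nat.lt_succ_iff.mp (Finset.mem_range.mp hi)
      rw [mul_assoc, ← pow_succ]
      congr 2
      omega
    · simp
end

section
/- Let C be an abelian group with endomorphisms ∂, δ satisfying ∂² = δ² = ∂δ + δ∂ = 0, and endomorphisms f, H with ∂H + H∂ = f − 1 and ∂f = f∂. Assume that for every c ∈ C there is a positive integer S(c) with (δH)^{S(c)}(c) = 0 and (δH)^{S(c)}(f(δH)^k c) = 0 for all k. Define the pointwise-finite sums ℍ := Σ_{d≥0} H(δH)^d and 𝔽 := Σ_{d≥0} Σ_{i=0}^{d} (Hδ)^i f(δH)^{d−i}, and set D := ∂ + δ. Then Dℍ + ℍD = 𝔽 − 1. -/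
section ring
variable {R : Type*} [Ring R] (p δ f H : R)

lemma aux1 : ∀ d : ℕ, H * (δ * H) ^ d = (H * δ) ^ d * H := by
  intro d
  induction d with
  | zero => simp
  | succ d ih =>
    rw [pow_succ' (δ * H), pow_succ' (H * δ), ← mul_assoc H (δ * H) _, ← mul_assoc H δ H,
      mul_assoc (H * δ) H _, ih, ← mul_assoc]

lemma aux2 (j : ℕ) : H * (δ * H) ^ j * δ = (H * δ) ^ (j + 1) := by
  rw [aux1, mul_assoc, ← pow_succ]

lemma aux3 (hδ : δ * δ = 0) (d : ℕ) : (H * δ) ^ (d + 1) * (δ * H) = 0 := by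
  rw [pow_succ, mul_assoc, show (H * δ) * (δ * H) = H * (δ * δ) * H by noncomm_ring, hδ]
  simp

lemma KI (hδ : δ * δ = 0) (hpδ : p * δ + δ * p = 0) (hH : p * H + H * p = f - 1) :
    ∀ d : ℕ, p * (H * (δ * H) ^ (d + 1)) + (H * (δ * H) ^ (d + 1)) * p
      = (∑ i ∈ Finset.range (d + 2), (H * δ) ^ i * f * (δ * H) ^ (d + 1 - i))
        - (δ * H) ^ (d + 1) - (H * δ) ^ (d + 1) := by
  intro d
  induction d with
  | zero =>
    have hsum : (∑ i ∈ Finset.range 2, (H * δ) ^ i * f * (δ * H) ^ (1 - i))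
        = f * (δ * H) + (H * δ) * f := by
      rw [Finset.sum_range_succ, Finset.sum_range_one]
      norm_num
    rw [hsum, pow_one, pow_one]
    rw [← sub_eq_zero]
    have comb : p * (H * (δ * H)) + (H * (δ * H)) * p - (f * (δ * H) + H * δ * f - δ * H - H * δ)
        = (p * H + H * p - (f - 1)) * (δ * H) - H * ((p * δ + δ * p) * H)
          + (H * δ) * (p * H + H * p - (f - 1)) := by noncomm_ring
    rw [hH, hpδ] at comb
    simpa using comb
  | succ d ih =>
    have Fsucc : (∑ i ∈ Finset.range (d + 3), (H * δ) ^ i * f * (δ * H) ^ (d + 2 - i))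
        = (∑ i ∈ Finset.range (d + 2), (H * δ) ^ i * f * (δ * H) ^ (d + 1 - i)) * (δ * H)
          + ((H * δ) ^ (d + 1) * (H * δ)) * f := by
      rw [Finset.sum_range_succ, Finset.sum_mul]
      congr 1
      · refine Finset.sum_congr rfl fun i hi => ?_
        have h2 : d + 2 - i = (d + 1 - i) + 1 := by
          have := Finset.mem_range.mp hi; omega
        rw [h2, pow_succ, ← mul_assoc]
      · have h0 : d + 2 - (d + 2) = 0 := by omega
        rw [h0, pow_zero, mul_one, pow_succ]
    have hXY : H * (δ * H) ^ (d + 1) * δ = (H * δ) ^ (d + 1) * (H * δ) := by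
      rw [aux2, pow_succ]
    have hba := aux3 δ H hδ d
    have hpow : (d + 1 + 1) = (d + 2) := rfl
    rw [hpow, show (δ * H) ^ (d + 2) = (δ * H) ^ (d + 1) * (δ * H) from pow_succ _ _,
      show (H * δ) ^ (d + 2) = (H * δ) ^ (d + 1) * (H * δ) from pow_succ _ _, Fsucc]
    rw [← sub_eq_zero]
    have comb : ∀ X Y F1 : R,
        p * (H * (X * (δ * H))) + (H * (X * (δ * H))) * p
          - (F1 * (δ * H) + (Y * (H * δ)) * f - X * (δ * H) - Y * (H * δ))
        = (p * (H * X) + (H * X) * p - (F1 - X - Y)) * (δ * H) - Y * (δ * H)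
          - H * X * ((p * δ + δ * p) * H) + H * X * (δ * (p * H + H * p - (f - 1)))
          + (H * X * δ - Y * (H * δ)) * (f - 1) := by
      intro X Y F1; noncomm_ring
    have comb' := comb ((δ * H) ^ (d + 1)) ((H * δ) ^ (d + 1))
      (∑ i ∈ Finset.range (d + 2), (H * δ) ^ i * f * (δ * H) ^ (d + 1 - i))
    rw [ih, hpδ, hH, hba, hXY] at comb'
    simpa using comb'

lemma KEY (hδ : δ * δ = 0) (hpδ : p * δ + δ * p = 0) (hH : p * H + H * p = f - 1) :
    ∀ N : ℕ, ∑ d ∈ Finset.range (N + 1),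
        ((p + δ) * (H * (δ * H) ^ d) + (H * (δ * H) ^ d) * (p + δ))
      = (∑ d ∈ Finset.range (N + 1), ∑ i ∈ Finset.range (d + 1),
          (H * δ) ^ i * f * (δ * H) ^ (d - i))
        - 1 + (δ * H) ^ (N + 1) + (H * δ) ^ (N + 1) := by
  intro N
  induction N with
  | zero =>
    rw [Finset.sum_range_one, Finset.sum_range_one, Finset.sum_range_one]
    simp only [pow_zero, pow_one, mul_one, one_mul, Nat.sub_zero]
    rw [← sub_eq_zero]
    have comb : (p + δ) * H + H * (p + δ) - (f - 1 + δ * H + H * δ)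
        = (p * H + H * p - (f - 1)) := by noncomm_ring
    rw [hH] at comb
    simpa using comb
  | succ N ih =>
    rw [Finset.sum_range_succ, ih, Finset.sum_range_succ
      (fun d => ∑ i ∈ Finset.range (d + 1), (H * δ) ^ i * f * (δ * H) ^ (d - i)) (N + 1)]
    have ha2 : δ * (H * (δ * H) ^ (N + 1)) = (δ * H) ^ (N + 1 + 1) := by
      rw [← mul_assoc, ← pow_succ']
    have hb2 : (H * (δ * H) ^ (N + 1)) * δ = (H * δ) ^ (N + 1 + 1) := aux2 δ H (N + 1)
    have ki := KI p δ f H hδ hpδ hH N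
    have t : (p + δ) * (H * (δ * H) ^ (N + 1)) + (H * (δ * H) ^ (N + 1)) * (p + δ)
        = (∑ i ∈ Finset.range (N + 1 + 1), (H * δ) ^ i * f * (δ * H) ^ (N + 1 - i))
          + (δ * H) ^ (N + 1 + 1) + (H * δ) ^ (N + 1 + 1)
          - (δ * H) ^ (N + 1) - (H * δ) ^ (N + 1) := by
      calc (p + δ) * (H * (δ * H) ^ (N + 1)) + (H * (δ * H) ^ (N + 1)) * (p + δ)
          = (p * (H * (δ * H) ^ (N + 1)) + (H * (δ * H) ^ (N + 1)) * p)
            + δ * (H * (δ * H) ^ (N + 1)) + (H * (δ * H) ^ (N + 1)) * δ := by noncomm_ring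
        _ = _ := by rw [ki, ha2, hb2]; abel
    rw [t]
    abel

end ring

private def ev {C : Type*} [AddCommGroup C] (c : C) : AddMonoid.End C →+ C :=
  AddMonoidHom.mk' (fun φ => φ c) (fun _ _ => rfl)

@[simp] private lemma ev_apply {C : Type*} [AddCommGroup C] (c : C) (φ : AddMonoid.End C) :
    ev c φ = φ c := rfl

/-- With `ℍ := ∑_{d≥0} H(δH)^d` and `𝔽 := ∑_{d≥0} f_d` (pointwise finite sums)
and `D := ∂ + δ`, one has `Dℍ + ℍD = 𝔽 - 1`. -/
theorem stmt_3 {C : Type*} [AddCommGroup C]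
    (p δ f H : AddMonoid.End C)
    (hp : p * p = 0) (hδ : δ * δ = 0) (hpδ : p * δ + δ * p = 0)
    (hf : p * f = f * p)
    (hH : p * H + H * p = f - 1)
    (hnil : ∀ c : C, ∃ S : ℕ, 0 < S ∧ ((δ * H) ^ S) c = 0 ∧
      ∀ k : ℕ, ((δ * H) ^ S) (f (((δ * H) ^ k) c)) = 0) :
    ∀ c : C,
      (p + δ) (∑ᶠ d : ℕ, (H * (δ * H) ^ d) c)
        + (∑ᶠ d : ℕ, (H * (δ * H) ^ d) ((p + δ) c))
      = (∑ᶠ d : ℕ, ∑ i ∈ Finset.range (d + 1),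
          ((H * δ) ^ i * f * (δ * H) ^ (d - i)) c) - c := by
  intro c
  obtain ⟨S, -, hS, -⟩ := hnil c
  obtain ⟨S₂, -, hS₂, -⟩ := hnil ((p + δ) c)
  obtain ⟨Sδ, -, hSδ, -⟩ := hnil (δ c)
  choose T hT0 hT1 hT2 using fun k : ℕ => hnil (δ (f (((δ * H) ^ k) c)))
  set M := (Finset.range S).sup T with hM
  set K := S + S₂ + Sδ + M + 1 with hK
  have mulapp : ∀ (x y : AddMonoid.End C) (z : C), (x * y) z = x (y z) := fun _ _ _ => rfl
  have van : ∀ (x : C) (S' : ℕ), ((δ * H) ^ S') x = 0 → ∀ j, S' ≤ j → ((δ * H) ^ j) x = 0 := by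
    intro x S' hx j hj
    obtain ⟨t, rfl⟩ := Nat.exists_eq_add_of_le hj
    rw [Nat.add_comm, pow_add, mulapp, hx, map_zero]
  -- vanishing of the three summands for large indices
  have hv1 : ∀ d, K + 1 ≤ d → (H * (δ * H) ^ d) c = 0 := by
    intro d hd
    rw [mulapp, van c S hS d (by omega), map_zero]
  have hv2 : ∀ d, K + 1 ≤ d → (H * (δ * H) ^ d) ((p + δ) c) = 0 := by
    intro d hd
    rw [mulapp, van _ S₂ hS₂ d (by omega), map_zero]
  have hv3 : ∀ d, K + 1 ≤ d →
      (∑ i ∈ Finset.range (d + 1), ((H * δ) ^ i * f * (δ * H) ^ (d - i)) c) = 0 := by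
    intro d hd
    apply Finset.sum_eq_zero
    intro i hi
    have hi' := Finset.mem_range.mp hi
    rcases le_or_gt S (d - i) with h | h
    · rw [mulapp, mulapp, van c S hS (d - i) h, map_zero, map_zero]
    · have hTle : T (d - i) ≤ M := Finset.le_sup (Finset.mem_range.mpr h)
      obtain ⟨j, rfl⟩ : ∃ j, i = j + 1 := ⟨i - 1, by omega⟩
      rw [mulapp, mulapp, ← aux2 δ H j, mulapp, mulapp,
        van _ (T (d - (j + 1))) (hT1 (d - (j + 1))) j (by omega), map_zero]
  -- boundary terms vanish
  have hb1 : ((δ * H) ^ (K + 1)) c = 0 := van c S hS _ (by omega)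
  have hb2 : ((H * δ) ^ (K + 1)) c = 0 := by
    rw [show (H * δ) ^ (K + 1) = H * (δ * H) ^ K * δ from (aux2 δ H K).symm,
      mulapp, mulapp, van (δ c) Sδ hSδ K (by omega), map_zero]
  -- convert the finsums to finite sums
  have e1 : ∑ᶠ d : ℕ, (H * (δ * H) ^ d) c
      = ∑ d ∈ Finset.range (K + 1), (H * (δ * H) ^ d) c := by
    apply finsum_eq_sum_of_support_subset
    intro d hd
    simp only [Function.mem_support] at hd
    simp only [Finset.coe_range, Set.mem_Iio]
    by_contra hcon
    exact hd (hv1 d (by omega))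
  have e2 : ∑ᶠ d : ℕ, (H * (δ * H) ^ d) ((p + δ) c)
      = ∑ d ∈ Finset.range (K + 1), (H * (δ * H) ^ d) ((p + δ) c) := by
    apply finsum_eq_sum_of_support_subset
    intro d hd
    simp only [Function.mem_support] at hd
    simp only [Finset.coe_range, Set.mem_Iio]
    by_contra hcon
    exact hd (hv2 d (by omega))
  have e3 : (∑ᶠ d : ℕ, ∑ i ∈ Finset.range (d + 1), ((H * δ) ^ i * f * (δ * H) ^ (d - i)) c)
      = ∑ d ∈ Finset.range (K + 1),
          ∑ i ∈ Finset.range (d + 1), ((H * δ) ^ i * f * (δ * H) ^ (d - i)) c := by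
    apply finsum_eq_sum_of_support_subset
    intro d hd
    simp only [Function.mem_support] at hd
    simp only [Finset.coe_range, Set.mem_Iio]
    by_contra hcon
    exact hd (hv3 d (by omega))
  -- assemble via the operator identity
  have h1 := congrArg (ev c) (KEY p δ f H hδ hpδ hH K)
  simp only [map_sum, map_sub, map_add, ev_apply] at h1
  rw [hb1, hb2, add_zero, add_zero, AddMonoid.End.one_apply] at h1
  rw [e1, e2, e3, map_sum, ← Finset.sum_add_distrib]
  simp only [AddMonoid.End.coe_mul, Function.comp_apply] at h1 ⊢
  exact h1
end

section
/- Let G be a group, φ : G → Z a group homomorphism, and μ ∈ G with φ(μ) = 1. If β is a nonzero element of the group ring Z[G], then the support of (1 − μ)·β contains two elements g, h with φ(g) ≠ φ(h). Consequently, if every element of the support of (1 − μ)·β lies in the kernel of φ, then β = 0; in particular left multiplication by (1 − μ) is injective on Z[G]. -/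
namespace MonoidAlgebra

variable {R G : Type*} [Ring R] [Group G]

theorem coeff_one_sub_single_mul (μ : G) (β : MonoidAlgebra R G) (x : G) :
    ((1 - single μ (1 : R)) * β).coeff x = β.coeff x - β.coeff (μ⁻¹ * x) := by
  rw [sub_mul, one_mul, coeff_sub, Finsupp.sub_apply, coeff_single_mul_apply, one_mul]

/-- `(1 - μ)·β` keeps the term `-β_g · μg` for `g` maximising `φ` on the support of `β`, and the
term `β_h · h` for `h` minimising it; their `φ`-values differ since `φ h ≤ φ g < φ (μ g)`. -/
theorem exists_mem_support_one_sub_single_mul_ne {α : Type*} [LinearOrder α] (φ : G → α)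
    (μ : G) (hφ : ∀ g, φ g < φ (μ * g)) {β : MonoidAlgebra R G} (hβ : β ≠ 0) :
    ∃ g ∈ ((1 - single μ (1 : R)) * β).coeff.support,
      ∃ h ∈ ((1 - single μ (1 : R)) * β).coeff.support, φ g ≠ φ h := by
  have hne : β.coeff.support.Nonempty :=
    Finsupp.support_nonempty_iff.2 (mt coeff_eq_zero.1 hβ)
  obtain ⟨g, hg, hg_max⟩ := β.coeff.support.exists_max_image φ hne
  obtain ⟨h, hh, hh_min⟩ := β.coeff.support.exists_min_image φ hne
  have above_max : β.coeff (μ * g) = 0 :=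
    Finsupp.notMem_support_iff.1 fun hμg => (hφ g).not_ge (hg_max _ hμg)
  have below_min : β.coeff (μ⁻¹ * h) = 0 := by
    refine Finsupp.notMem_support_iff.1 fun hμh => ?_
    have := hφ (μ⁻¹ * h)
    rw [mul_inv_cancel_left] at this
    exact this.not_ge (hh_min _ hμh)
  refine ⟨μ * g, ?_, h, ?_, ((hh_min g hg).trans_lt (hφ g)).ne'⟩
  · rw [Finsupp.mem_support_iff, coeff_one_sub_single_mul, above_max, inv_mul_cancel_left,
      zero_sub, neg_ne_zero]
    exact Finsupp.mem_support_iff.1 hg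
  · rw [Finsupp.mem_support_iff, coeff_one_sub_single_mul, below_min, sub_zero]
    exact Finsupp.mem_support_iff.1 hh

theorem eq_zero_of_one_sub_single_mul_eq_zero {α : Type*} [LinearOrder α] (φ : G → α)
    (μ : G) (hφ : ∀ g, φ g < φ (μ * g)) {β : MonoidAlgebra R G}
    (hβ : (1 - single μ (1 : R)) * β = 0) : β = 0 := by
  by_contra hβ0
  obtain ⟨g, hg, -⟩ := exists_mem_support_one_sub_single_mul_ne φ μ hφ hβ0
  simp [hβ] at hg

end MonoidAlgebra

open MonoidAlgebra in
/-- If `φ : G → ℤ` is a homomorphism with `φ μ = 1`, then for nonzero `β` in `ℤ[G]`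
the support of `(1 - μ)·β` contains elements with different `φ`-values; consequently
if the support of `(1 - μ)·β` lies in `ker φ` then `β = 0`, and left multiplication
by `1 - μ` is injective. -/
theorem stmt_4 {G : Type*} [Group G] (φ : G → ℤ)
    (hφ : ∀ a b : G, φ (a * b) = φ a + φ b)
    (μ : G) (hμ : φ μ = 1) :
    (∀ β : MonoidAlgebra ℤ G, β ≠ 0 →
      ∃ g ∈ ((1 - MonoidAlgebra.single μ (1 : ℤ)) * β).coeff.support,
      ∃ h ∈ ((1 - MonoidAlgebra.single μ (1 : ℤ)) * β).coeff.support,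
        φ g ≠ φ h) ∧
    (∀ β : MonoidAlgebra ℤ G,
      (∀ g ∈ ((1 - MonoidAlgebra.single μ (1 : ℤ)) * β).coeff.support, φ g = 0) →
      β = 0) ∧
    Function.Injective (fun β : MonoidAlgebra ℤ G =>
      (1 - MonoidAlgebra.single μ (1 : ℤ)) * β) := by
  have hμφ : ∀ g, φ g < φ (μ * g) := fun g => by rw [hφ, hμ]; omega
  refine ⟨fun β => exists_mem_support_one_sub_single_mul_ne φ μ hμφ, fun β hker => ?_,
    fun a b hab => ?_⟩
  · by_contra hβ
    obtain ⟨g, hg, h, hh, hgh⟩ := exists_mem_support_one_sub_single_mul_ne φ μ hμφ hβ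
    exact hgh ((hker g hg).trans (hker h hh).symm)
  · rw [← sub_eq_zero]
    exact eq_zero_of_one_sub_single_mul_eq_zero φ μ hμφ (by rw [mul_sub, sub_eq_zero]; exact hab)
end

section
/- Let R = Z[λ^{±1}, μ^{±1}] be the Laurent polynomial ring in two commuting variables and I the principal ideal generated by (λ − 1)(μ − 1). Then the Z-linear map Z[λ^{±1}] ⊕ Z[μ^{±1}] → R/I sending (α, β) to the class of α + (μ − 1)β is an isomorphism of Z-modules. -/
/-!
Write `λ = single (1, 0) 1` and `μ = single (0, 1) 1`. Injectivity: the ring maps `μ ↦ 1` and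
`λ ↦ 1` kill `(λ - 1)(μ - 1)`, and send `α + (μ - 1)β` to `α` and to `α(1) + (μ - 1)β`
respectively; `μ - 1` is not a zero divisor in `k[μ^{±1}]`. Surjectivity: since `λ - 1 ∣ λ^a - 1`
and `μ - 1 ∣ μ^b - 1`, the identity `λ^a μ^b = λ^a + (μ^b - 1) + (λ^a - 1)(μ^b - 1)` shows that
every monomial is congruent to an element of the image.
-/

open AddMonoidAlgebra

namespace AddMonoidAlgebra

variable {k : Type*} [Ring k]

theorem sub_one_dvd_single_zsmul_sub_one {G : Type*} [AddCommGroup G] (g : G) (n : ℤ) :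
    (single g 1 - 1 : k[G]) ∣ single (n • g) 1 - 1 := by
  have hpow (m : ℕ) : (single g 1 - 1 : k[G]) ∣ single ((m : ℤ) • g) 1 - 1 := by
    simpa [single_pow] using sub_one_dvd_pow_sub_one (single g (1 : k)) m
  obtain ⟨m, rfl | rfl⟩ := n.eq_nat_or_neg
  · exact hpow m
  · refine (hpow m).trans ⟨-single (-(m : ℤ) • g) 1, ?_⟩
    simp [sub_mul, single_mul_single, one_def]

theorem single_sub_one_ne_zero [Nontrivial k] {G : Type*} [AddMonoid G] {g : G} (hg : g ≠ 0) :
    (single g 1 - 1 : k[G]) ≠ 0 := by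
  rw [one_def, sub_ne_zero, Ne, single_left_inj one_ne_zero]
  exact hg

theorem mapDomainRingHom_single_sub_one {G H : Type*} [AddMonoid G] [AddMonoid H] (f : G →+ H)
    (g : G) : mapDomainRingHom k f (single g 1 - 1) = single (f g) 1 - 1 := by
  rw [map_sub, map_one, mapDomainRingHom_apply, mapDomain_single]

theorem mapDomainRingHom_mapDomainRingHom {G H : Type*} [AddMonoid G] [AddMonoid H]
    {f : H →+ G} {g : G →+ H} (hfg : f.comp g = .id G) (a : k[G]) :
    mapDomainRingHom k f (mapDomainRingHom k g a) = a := by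
  rw [← RingHom.comp_apply, ← mapDomainRingHom_comp, hfg, mapDomainRingHom_id, RingHom.id_apply]

end AddMonoidAlgebra

namespace LaurentQuotient

variable {k : Type*} [CommRing k]

/-- `(α, β) ↦ α + (μ - 1) β` -/
noncomputable def inlAddMulInr : k[ℤ] × k[ℤ] →+ k[ℤ × ℤ] :=
  (mapDomainRingHom k (.inl ℤ ℤ)).toAddMonoidHom.coprod
    ((AddMonoidHom.mulLeft (single (0, 1) 1 - 1)).comp
      (mapDomainRingHom k (.inr ℤ ℤ)).toAddMonoidHom)

theorem inlAddMulInr_apply (p : k[ℤ] × k[ℤ]) :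
    inlAddMulInr p = mapDomainRingHom k (.inl ℤ ℤ) p.1
      + (single (0, 1) 1 - 1) * mapDomainRingHom k (.inr ℤ ℤ) p.2 :=
  rfl

theorem eq_zero_of_inlAddMulInr_mem_span [IsDomain k] {p : k[ℤ] × k[ℤ]}
    (hp : inlAddMulInr p ∈ Ideal.span {(single (1, 0) 1 - 1) * (single (0, 1) 1 - 1)}) :
    p = 0 := by
  obtain ⟨w, hw⟩ := Ideal.mem_span_singleton'.1 hp
  rw [inlAddMulInr_apply] at hw
  have hfst := congrArg (mapDomainRingHom k (.fst ℤ ℤ)) hw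
  have hsnd := congrArg (mapDomainRingHom k (.snd ℤ ℤ)) hw
  simp only [map_add, map_mul, mapDomainRingHom_single_sub_one, AddMonoidHom.coe_fst,
    AddMonoidHom.coe_snd, ← one_def, sub_self, zero_mul, mul_zero, add_zero,
    mapDomainRingHom_mapDomainRingHom (AddMonoidHom.fst_comp_inl (M := ℤ) (N := ℤ)),
    mapDomainRingHom_mapDomainRingHom (AddMonoidHom.snd_comp_inr (M := ℤ) (N := ℤ))] at hfst hsnd
  rw [← hfst, map_zero, map_zero, zero_add, eq_comm, mul_eq_zero] at hsnd
  exact Prod.ext hfst.symm (hsnd.resolve_left (single_sub_one_ne_zero one_ne_zero))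

theorem exists_inlAddMulInr_sub_single_mem_span (a b : ℤ) (c : k) :
    ∃ p, inlAddMulInr p - single (a, b) c ∈
      Ideal.span {(single (1, 0) 1 - 1) * (single (0, 1) 1 - 1)} := by
  obtain ⟨v, hv⟩ := sub_one_dvd_single_zsmul_sub_one (k := k) ((1 : ℤ), (0 : ℤ)) a
  obtain ⟨u, hu⟩ := sub_one_dvd_single_zsmul_sub_one (k := k) (1 : ℤ) b
  set U := mapDomainRingHom k (.inr ℤ ℤ) u
  have hlam : (single (a, 0) 1 : k[ℤ × ℤ]) = 1 + (single (1, 0) 1 - 1) * v := by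
    simpa [sub_eq_iff_eq_add'] using hv
  have hmu : (single (0, b) 1 : k[ℤ × ℤ]) = 1 + (single (0, 1) 1 - 1) * U := by
    rw [smul_eq_mul, mul_one] at hu
    have h := congrArg (mapDomainRingHom k (.inr ℤ ℤ)) hu
    rwa [map_mul, mapDomainRingHom_single_sub_one, mapDomainRingHom_single_sub_one,
      sub_eq_iff_eq_add'] at h
  have hsplit_a : (single (a, 0) c : k[ℤ × ℤ]) = single (0, 0) c * single (a, 0) 1 := by
    simp [single_mul_single]
  have hsplit_ab : (single (a, b) c : k[ℤ × ℤ]) =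
      single (0, 0) c * single (a, 0) 1 * single (0, b) 1 := by
    simp [single_mul_single]
  refine ⟨(single a c, single 0 c * u),
    Ideal.mem_span_singleton'.2 ⟨-(single (0, 0) c * v * U), ?_⟩⟩
  rw [inlAddMulInr_apply, map_mul, mapDomainRingHom_apply, mapDomainRingHom_apply,
    mapDomain_single, mapDomain_single, AddMonoidHom.inl_apply, AddMonoidHom.inr_apply,
    hsplit_ab, hsplit_a, hlam, hmu]
  ring

theorem exists_inlAddMulInr_sub_mem_span (r : k[ℤ × ℤ]) :
    ∃ p, inlAddMulInr p - r ∈ Ideal.span {(single (1, 0) 1 - 1) * (single (0, 1) 1 - 1)} := by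
  induction r using AddMonoidAlgebra.induction_linear with
  | zero => exact ⟨0, by simp⟩
  | add r s hr hs =>
    obtain ⟨p, hp⟩ := hr
    obtain ⟨q, hq⟩ := hs
    exact ⟨p + q, by simpa [map_add, add_sub_add_comm] using add_mem hp hq⟩
  | single ab c => exact exists_inlAddMulInr_sub_single_mem_span ab.1 ab.2 c

end LaurentQuotient

open LaurentQuotient in
/-- `ℤ[λ^{±1}] ⊕ ℤ[μ^{±1}] → ℤ[λ^{±1},μ^{±1}]/((λ-1)(μ-1))`, `(α,β) ↦ α + (μ-1)β`,
is a `ℤ`-module isomorphism. -/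
theorem stmt_7
    (I : Ideal (AddMonoidAlgebra ℤ (ℤ × ℤ)))
    (hI : I = Ideal.span
      {(AddMonoidAlgebra.single ((1 : ℤ), (0 : ℤ)) (1 : ℤ) - 1) *
        (AddMonoidAlgebra.single ((0 : ℤ), (1 : ℤ)) (1 : ℤ) - 1)}) :
    Function.Bijective (fun p : AddMonoidAlgebra ℤ ℤ × AddMonoidAlgebra ℤ ℤ =>
      Ideal.Quotient.mk I
        (AddMonoidAlgebra.mapDomainRingHom ℤ (AddMonoidHom.inl ℤ ℤ) p.1
          + (AddMonoidAlgebra.single ((0 : ℤ), (1 : ℤ)) (1 : ℤ) - 1)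
            * AddMonoidAlgebra.mapDomainRingHom ℤ (AddMonoidHom.inr ℤ ℤ) p.2)) := by
  subst hI
  change Function.Bijective ((Ideal.Quotient.mk _).toAddMonoidHom.comp inlAddMulInr)
  refine ⟨(injective_iff_map_eq_zero _).2 fun p hp => ?_, fun y => ?_⟩
  · exact eq_zero_of_inlAddMulInr_mem_span (Ideal.Quotient.eq_zero_iff_mem.1 hp)
  · obtain ⟨r, rfl⟩ := Ideal.Quotient.mk_surjective y
    obtain ⟨p, hp⟩ := exists_inlAddMulInr_sub_mem_span r
    exact ⟨p, Ideal.Quotient.eq.2 hp⟩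
end

section
/- Let A be a (possibly noncommutative) ring, μ ∈ A, and C ⊆ A a subring every element of which commutes with μ. Define a multiplication on the abelian group C ⊕ A by (a, x) * (b, y) := (ab, ay + xb + xy − xμy). Then * is associative. -/
/-- The multiplication `(a,x)*(b,y) := (ab, ay + xb + xy - xμy)` on `C ⊕ A` is
associative, when every element of the subring `C` commutes with `μ`. -/
theorem stmt_8 {A : Type*} [Ring A] (μ : A) (C : Subring A)
    (hC : ∀ c ∈ C, c * μ = μ * c)
    (m : C × A → C × A → C × A)
    (hm : ∀ p q : C × A,
      m p q = (p.1 * q.1,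
        (p.1 : A) * q.2 + p.2 * (q.1 : A) + p.2 * q.2 - p.2 * μ * q.2)) :
    ∀ p q r : C × A, m (m p q) r = m p (m q r) := by
  rintro ⟨a, x⟩ ⟨b, y⟩ ⟨c, z⟩
  simp only [hm, Prod.mk.injEq]
  refine ⟨mul_assoc a b c, ?_⟩
  have hb : (b : A) * μ = μ * (b : A) := hC b b.2
  push_cast
  simp only [mul_add, add_mul, sub_mul, mul_sub, mul_assoc]
  rw [show μ * ((b : A) * z) = (b : A) * (μ * z) from by rw [← mul_assoc, ← hb, mul_assoc]]
  abel
end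

section
/- Let X, Y be Banach spaces, A : X → Y a bounded linear map with a bounded linear right inverse Q : Y → X (i.e. A∘Q = id_Y), and let N : X → Y satisfy N(0) = 0 and ‖Q(N(u)) − Q(N(v))‖ ≤ G(‖u‖ + ‖v‖)‖u − v‖ for some constant G > 0 and all u, v in the closed ball of radius 1/(4G). Let y₀ ∈ Y with ‖Q(y₀)‖ ≤ 1/(8G) and define f(x) := y₀ + A x + N(x). Then there exists x ∈ X with ‖x‖ ≤ 2‖Q(y₀)‖ and f(x) = 0; moreover x can be taken of the form x = Q(z) for some z ∈ Y, and such an x is unique among points of the image of Q in the ball of radius 2‖Q(y₀)‖. -/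
/-!
Since `A ∘ Q = id`, the zeros of `f` lying in the range of `Q` are exactly the fixed points of
`T x = -(Q y₀ + Q (N x))`. On the ball of radius `r = 2‖Q y₀‖ ≤ 1/(4G)` the quadratic estimate
makes `Q ∘ N` a `1/2`-Lipschitz map vanishing at `0`, so `T` maps the ball into itself and is a
`1/2`-contraction there; the Banach fixed point theorem gives existence and uniqueness.
-/

open Set Metric NNReal Function

theorem exists_unique_isFixedPt_of_lipschitzOnWith {α : Type*} [MetricSpace α] {f : α → α}
    {s : Set α} {K : ℝ≥0} (hK : K < 1) (hsc : IsComplete s) (hs : s.Nonempty)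
    (hsf : MapsTo f s s) (hf : LipschitzOnWith K f s) :
    ∃! x, x ∈ s ∧ IsFixedPt f x := by
  have hc : ContractingWith K (hsf.restrict f s s) := ⟨hK, hf.mapsToRestrict hsf⟩
  obtain ⟨x, hxs⟩ := hs
  obtain ⟨y, hys, hy, -⟩ := hc.exists_fixedPoint' hsc hsf hxs (edist_ne_top _ _)
  refine ⟨y, ⟨hys, hy⟩, fun z ⟨hzs, hz⟩ => ?_⟩
  have := hsc.completeSpace_coe
  exact congrArg Subtype.val (hc.fixedPoint_unique' (x := ⟨z, hzs⟩) (y := ⟨y, hys⟩)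
    (Subtype.ext hz) (Subtype.ext hy))

section

variable {E E' : Type*} [SeminormedAddCommGroup E] [SeminormedAddCommGroup E']

theorem lipschitzOnWith_half_of_norm_sub_le {F : E → E'} {G r : ℝ} (hG : 0 ≤ G)
    (hGr : G * r ≤ 1 / 4)
    (hF : ∀ u ∈ closedBall (0 : E) r, ∀ v ∈ closedBall (0 : E) r,
      ‖F u - F v‖ ≤ G * (‖u‖ + ‖v‖) * ‖u - v‖) :
    LipschitzOnWith (1 / 2) F (closedBall 0 r) := by
  refine LipschitzOnWith.of_dist_le_mul fun u hu v hv => ?_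
  rw [mem_closedBall_zero_iff] at hu hv
  have hsmall : G * (‖u‖ + ‖v‖) ≤ 1 / 2 := by nlinarith
  rw [dist_eq_norm, dist_eq_norm]
  calc ‖F u - F v‖ ≤ G * (‖u‖ + ‖v‖) * ‖u - v‖ := hF u (by simpa) v (by simpa)
    _ ≤ 1 / 2 * ‖u - v‖ := by gcongr
    _ = ((1 / 2 : ℝ≥0) : ℝ) * ‖u - v‖ := by norm_num

theorem mapsTo_closedBall_neg_add {F : E → E} (c : E)
    (hF : LipschitzOnWith (1 / 2) F (closedBall 0 (2 * ‖c‖))) (hF0 : F 0 = 0) :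
    MapsTo (fun x => -(c + F x)) (closedBall 0 (2 * ‖c‖)) (closedBall 0 (2 * ‖c‖)) := by
  intro x hx
  have h0 : (0 : E) ∈ closedBall 0 (2 * ‖c‖) := mem_closedBall_self (by positivity)
  have hFx : ‖F x‖ ≤ 1 / 2 * ‖x‖ := by
    simpa [hF0, dist_eq_norm] using hF.dist_le_mul x hx 0 h0
  rw [mem_closedBall_zero_iff] at hx ⊢
  calc ‖-(c + F x)‖ ≤ ‖c‖ + ‖F x‖ := by rw [norm_neg]; exact norm_add_le _ _
    _ ≤ 2 * ‖c‖ := by linarith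

theorem lipschitzOnWith_neg_add {α : Type*} [PseudoMetricSpace α] {F : α → E} {s : Set α} {K : ℝ≥0} (c : E)
    (hF : LipschitzOnWith K F s) : LipschitzOnWith K (fun x => -(c + F x)) s :=
  LipschitzOnWith.of_dist_le_mul fun u hu v hv => by
    simpa [dist_neg_neg] using hF.dist_le_mul u hu v hv

end

/-- Floer's Picard lemma (existence and uniqueness part). -/
theorem stmt_16 {X Y : Type*}
    [NormedAddCommGroup X] [NormedSpace ℝ X] [CompleteSpace X]
    [NormedAddCommGroup Y] [NormedSpace ℝ Y]
    (A : X →L[ℝ] Y) (Q : Y →L[ℝ] X)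
    (hAQ : ∀ y : Y, A (Q y) = y)
    (N : X → Y) (hN0 : N 0 = 0)
    (G : ℝ) (hG : 0 < G)
    (hquad : ∀ u v : X, ‖u‖ ≤ 1 / (4 * G) → ‖v‖ ≤ 1 / (4 * G) →
      ‖Q (N u) - Q (N v)‖ ≤ G * (‖u‖ + ‖v‖) * ‖u - v‖)
    (y₀ : Y) (hy₀ : ‖Q y₀‖ ≤ 1 / (8 * G)) :
    ∃ x : X, ‖x‖ ≤ 2 * ‖Q y₀‖ ∧ y₀ + A x + N x = 0 ∧ (∃ z : Y, x = Q z) ∧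
      ∀ x' : X, (∃ z' : Y, x' = Q z') → ‖x'‖ ≤ 2 * ‖Q y₀‖ →
        y₀ + A x' + N x' = 0 → x' = x := by
  have hGr : G * (2 * ‖Q y₀‖) ≤ 1 / 4 :=
    calc G * (2 * ‖Q y₀‖) ≤ G * (2 * (1 / (8 * G))) := by gcongr
      _ = 1 / 4 := by field_simp; ring
  have hr : 2 * ‖Q y₀‖ ≤ 1 / (4 * G) := by
    rw [le_div_iff₀ (by positivity)]; linarith
  have hlip : LipschitzOnWith (1 / 2) (fun x => Q (N x)) (closedBall 0 (2 * ‖Q y₀‖)) :=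
    lipschitzOnWith_half_of_norm_sub_le hG.le hGr fun u hu v hv =>
      hquad u v ((mem_closedBall_zero_iff.1 hu).trans hr) ((mem_closedBall_zero_iff.1 hv).trans hr)
  obtain ⟨x, ⟨hx, hfix⟩, huniq⟩ := exists_unique_isFixedPt_of_lipschitzOnWith one_half_lt_one
    isClosed_closedBall.isComplete ⟨0, mem_closedBall_self (by positivity)⟩
    (mapsTo_closedBall_neg_add (Q y₀) hlip (by simp [hN0])) (lipschitzOnWith_neg_add (Q y₀) hlip)
  have hxQ : x = Q (-(y₀ + N x)) := by
    rw [map_neg, map_add]; exact hfix.symm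
  have hAx : A x = -(y₀ + N x) := (congrArg A hxQ).trans (hAQ _)
  refine ⟨x, mem_closedBall_zero_iff.1 hx, by rw [hAx]; abel, ⟨_, hxQ⟩, ?_⟩
  rintro _ ⟨z, rfl⟩ hz hzero
  refine huniq _ ⟨mem_closedBall_zero_iff.2 hz, ?_⟩
  have hQzero := congrArg Q hzero
  rw [map_add, map_add, hAQ, map_zero] at hQzero
  change -(Q y₀ + Q (N (Q z))) = Q z
  rw [neg_eq_iff_add_eq_zero, ← hQzero]
  abel
end

section
/- Let γ : I → R³ be a C⁴ curve on an open interval I, and let t₀ ∈ I be such that the vectors γ'(t₀), γ''(t₀), γ'''(t₀), γ''''(t₀) span R³. Then there exists ε > 0 such that there do not exist a nonzero vector n ∈ R³, a constant c ∈ R, and five distinct points t₁, …, t₅ ∈ (t₀ − ε, t₀ + ε) ∩ I with ⟨n, γ(t_i)⟩ = c for all i = 1, …, 5; that is, no affine plane meets γ in five points near t₀. -/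
/-!
If a plane `⟨n, ·⟩ = c` met `γ` in five points of an interval, Rolle's theorem applied four
times to `t ↦ ⟨n, γ t⟩` would give, for each `k = 1, …, 4`, a point of that interval where
`⟨n, γ⁽ᵏ⁾⟩` vanishes. Spanning is an open condition on a finite family of vectors, so for
points `s₁, …, s₄` close enough to `t₀` the vectors `γ⁽ᵏ⁾(sₖ)` still span `ℝ³`, and no
nonzero `n` is orthogonal to all of them.
-/

open Set Filter Topology

theorem Set.encard_le_of_forall_finset_subset {α : Type*} {s : Set α} {k : ℕ∞}
    (h : ∀ u : Finset α, ↑u ⊆ s → (u.card : ℕ∞) ≤ k) : s.encard ≤ k := by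
  by_contra! hk
  have hk_top : k ≠ ⊤ := hk.ne_top
  obtain ⟨t, hts, ht⟩ := exists_subset_encard_eq ((ENat.add_one_le_iff hk_top).2 hk)
  have htfin : t.Finite := encard_ne_top_iff.1 (ht ▸ by simpa using hk_top)
  have hcard := h htfin.toFinset (by simpa using hts)
  rw [← htfin.encard_eq_coe_toFinset_card, ht] at hcard
  exact (ENat.add_one_le_iff hk_top).1 hcard |>.false

theorem encard_setOf_eq_le_encard_setOf_deriv_eq_zero_add_one {g : ℝ → ℝ}
    (hg : Differentiable ℝ g) {s : Set ℝ} (hs : s.OrdConnected) (c : ℝ) :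
    {x ∈ s | g x = c}.encard ≤ {x ∈ s | deriv g x = 0}.encard + 1 := by
  rcases {x ∈ s | deriv g x = 0}.finite_or_infinite with hfin | hinf
  swap
  · simp [hinf.encard_eq]
  refine encard_le_of_forall_finset_subset fun u hu => ?_
  rw [hfin.encard_eq_coe_toFinset_card]
  refine mod_cast Finset.card_le_of_interleaved fun x hx y hy hxy _ => ?_
  obtain ⟨hxs, hgx⟩ := hu hx
  obtain ⟨hys, hgy⟩ := hu hy
  obtain ⟨z, hz, hz0⟩ := exists_deriv_eq_zero hxy hg.continuous.continuousOn (hgx.trans hgy.symm)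
  exact ⟨z, hfin.mem_toFinset.2 ⟨hs.out hxs hys (Ioo_subset_Icc_self hz), hz0⟩, hz⟩

theorem encard_setOf_eq_le_encard_setOf_iteratedDeriv_eq_zero_add {f : ℝ → ℝ} {s : Set ℝ}
    (hs : s.OrdConnected) (c : ℝ) :
    ∀ {k : ℕ}, ContDiff ℝ (k + 1) f →
      {x ∈ s | f x = c}.encard ≤ {x ∈ s | iteratedDeriv (k + 1) f x = 0}.encard + (k + 1)
  | 0, hf => by
    simpa using encard_setOf_eq_le_encard_setOf_deriv_eq_zero_add_one
      (hf.differentiable (by norm_num)) hs c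
  | k + 1, hf => calc
      _ ≤ {x ∈ s | iteratedDeriv (k + 1) f x = 0}.encard + (k + 1) :=
        encard_setOf_eq_le_encard_setOf_iteratedDeriv_eq_zero_add hs c
          (hf.of_le (by norm_cast; omega))
      _ ≤ {x ∈ s | iteratedDeriv (k + 1 + 1) f x = 0}.encard + 1 + (k + 1) := by
        gcongr
        rw [iteratedDeriv_succ (n := k + 1)]
        exact encard_setOf_eq_le_encard_setOf_deriv_eq_zero_add_one
          (hf.differentiable_iteratedDeriv (k + 1) (by norm_cast; omega)) hs 0
      _ = _ := by push_cast; ring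

theorem exists_iteratedDeriv_eq_zero_of_injective {f : ℝ → ℝ} {m : ℕ} (hf : ContDiff ℝ m f)
    {s : Set ℝ} (hs : s.OrdConnected) {t : Fin (m + 1) → ℝ} (ht : Function.Injective t)
    (hts : ∀ i, t i ∈ s) {c : ℝ} (htc : ∀ i, f (t i) = c) {k : ℕ} (hk₀ : k ≠ 0) (hkm : k ≤ m) :
    ∃ x ∈ s, iteratedDeriv k f x = 0 := by
  obtain ⟨j, rfl⟩ := Nat.exists_eq_succ_of_ne_zero hk₀
  have hsub : range t ⊆ {x ∈ s | f x = c} := range_subset_iff.2 fun i => ⟨hts i, htc i⟩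
  have hcard : ((m + 1 : ℕ) : ℕ∞) ≤ {x ∈ s | f x = c}.encard := by
    simpa using ht.encard_range.trans (encard_le_encard hsub)
  have hle := hcard.trans (encard_setOf_eq_le_encard_setOf_iteratedDeriv_eq_zero_add hs c
    (hf.of_le (by exact_mod_cast hkm)))
  by_contra! hzero
  have hempty : {x ∈ s | iteratedDeriv (j + 1) f x = 0} = ∅ :=
    eq_empty_of_forall_notMem fun x hx => hzero x hx.1 hx.2
  rw [hempty, encard_empty, zero_add] at hle
  norm_cast at hle
  omega

theorem ContinuousLinearMap.iteratedDeriv_comp_left {𝕜 F G : Type*} [NontriviallyNormedField 𝕜]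
    [NormedAddCommGroup F] [NormedSpace 𝕜 F] [NormedAddCommGroup G] [NormedSpace 𝕜 G]
    (L : F →L[𝕜] G) {f : 𝕜 → F} {n : WithTop ℕ∞} {x : 𝕜} (hf : ContDiffAt 𝕜 n f x) {i : ℕ}
    (hi : i ≤ n) : iteratedDeriv i (L ∘ f) x = L (iteratedDeriv i f x) := by
  simp only [iteratedDeriv_eq_iteratedFDeriv, L.iteratedFDeriv_comp_left hf hi]
  rfl

theorem exists_inner_iteratedDeriv_eq_zero_of_injective {E : Type*} [NormedAddCommGroup E]
    [InnerProductSpace ℝ E] {γ : ℝ → E} {m : ℕ} (hγ : ContDiff ℝ m γ) {s : Set ℝ}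
    (hs : s.OrdConnected) {t : Fin (m + 1) → ℝ} (ht : Function.Injective t) (hts : ∀ i, t i ∈ s)
    (n : E) {c : ℝ} (htc : ∀ i, inner ℝ n (γ (t i)) = c) {k : ℕ} (hk₀ : k ≠ 0) (hkm : k ≤ m) :
    ∃ x ∈ s, inner ℝ n (iteratedDeriv k γ x) = 0 := by
  obtain ⟨x, hx, hx0⟩ := exists_iteratedDeriv_eq_zero_of_injective
    ((innerSL ℝ n).contDiff.comp hγ) hs ht hts htc hk₀ hkm
  rw [(innerSL ℝ n).iteratedDeriv_comp_left hγ.contDiffAt (by exact_mod_cast hkm)] at hx0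
  exact ⟨x, hx, hx0⟩

theorem Submodule.eventually_span_range_eq_top {𝕜 E ι : Type*} [NontriviallyNormedField 𝕜]
    [CompleteSpace 𝕜] [NormedAddCommGroup E] [NormedSpace 𝕜 E] [FiniteDimensional 𝕜 E]
    [Finite ι] {v : ι → E} (hv : span 𝕜 (range v) = ⊤) : ∀ᶠ w in 𝓝 v, span 𝕜 (range w) = ⊤ := by
  obtain ⟨κ, a, ha, hspan, hli⟩ := exists_linearIndependent' 𝕜 v
  have : Finite κ := .of_injective a ha
  cases nonempty_fintype κ
  refine ((Pi.continuous_precomp a).tendsto v).eventually hli.eventually |>.mono fun w hw => ?_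
  refine eq_top_mono (span_mono (range_comp_subset_range a w)) (eq_top_of_finrank_eq ?_)
  rw [finrank_span_eq_card hw, ← finrank_span_eq_card hli, hspan, hv, finrank_top]

theorem eq_zero_of_forall_inner_eq_zero_of_span_range_eq_top {E ι : Type*} [NormedAddCommGroup E]
    [InnerProductSpace ℝ E] {v : ι → E} (hv : Submodule.span ℝ (range v) = ⊤) {n : E}
    (h : ∀ i, inner ℝ n (v i) = 0) : n = 0 := by
  have hzero : innerₛₗ ℝ n = 0 := LinearMap.ext_on_range hv fun i => by simpa using h i
  exact inner_self_eq_zero.1 (LinearMap.congr_fun hzero n)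

theorem stmt_18_general (γ : ℝ → EuclideanSpace ℝ (Fin 3))
    (I : Set ℝ) (t₀ : ℝ)
    (hγ : ContDiff ℝ 4 γ)
    (hspan : Submodule.span ℝ
      {iteratedDeriv 1 γ t₀, iteratedDeriv 2 γ t₀,
        iteratedDeriv 3 γ t₀, iteratedDeriv 4 γ t₀} = ⊤) :
    ∃ ε > 0, ¬ ∃ (n : EuclideanSpace ℝ (Fin 3)) (c : ℝ) (t : Fin 5 → ℝ),
      n ≠ 0 ∧ Function.Injective t ∧
      (∀ i, t i ∈ Set.Ioo (t₀ - ε) (t₀ + ε) ∩ I) ∧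
      ∀ i, (inner ℝ n (γ (t i)) : ℝ) = c := by
  set D : (Fin 4 → ℝ) → Fin 4 → EuclideanSpace ℝ (Fin 3) :=
    fun s k => iteratedDeriv (k + 1) γ (s k)
  have hD : Continuous D := continuous_pi fun k =>
    (hγ.continuous_iteratedDeriv _ (by norm_cast; omega)).comp (continuous_apply k)
  have hD₀ : Submodule.span ℝ (range (D fun _ => t₀)) = ⊤ := by
    rw [← hspan]
    congr 1
    ext
    simp [D, Fin.exists_fin_succ, eq_comm]
  obtain ⟨ε, hε, hεspan⟩ := Metric.eventually_nhds_iff.1 <|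
    (hD.tendsto _).eventually (Submodule.eventually_span_range_eq_top hD₀)
  refine ⟨ε, hε, fun ⟨n, c, t, hn, ht, htε, htc⟩ => hn ?_⟩
  have hzero (k : Fin 4) :
      ∃ x ∈ Ioo (t₀ - ε) (t₀ + ε), inner ℝ n (iteratedDeriv (k + 1) γ x) = 0 :=
    exists_inner_iteratedDeriv_eq_zero_of_injective (m := 4) hγ ordConnected_Ioo ht
      (fun i => (htε i).1) n htc k.val.succ_ne_zero k.isLt
  choose s hsε hs using hzero
  refine eq_zero_of_forall_inner_eq_zero_of_span_range_eq_top (hεspan ?_) hs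
  exact (dist_pi_lt_iff hε).2 fun k => by simpa [← Real.ball_eq_Ioo] using hsε k

/-- If the first four derivatives of a `C⁴` space curve span `ℝ³` at `t₀`, then no
affine plane meets the curve in five distinct points near `t₀`. -/
theorem stmt_18 (γ : ℝ → EuclideanSpace ℝ (Fin 3))
    (I : Set ℝ) (hI : IsOpen I) (t₀ : ℝ) (ht₀ : t₀ ∈ I)
    (hγ : ContDiff ℝ 4 γ)
    (hspan : Submodule.span ℝ
      {iteratedDeriv 1 γ t₀, iteratedDeriv 2 γ t₀,
        iteratedDeriv 3 γ t₀, iteratedDeriv 4 γ t₀} = ⊤) :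
    ∃ ε > 0, ¬ ∃ (n : EuclideanSpace ℝ (Fin 3)) (c : ℝ) (t : Fin 5 → ℝ),
      n ≠ 0 ∧ Function.Injective t ∧
      (∀ i, t i ∈ Set.Ioo (t₀ - ε) (t₀ + ε) ∩ I) ∧
      ∀ i, (inner ℝ n (γ (t i)) : ℝ) = c :=
  stmt_18_general γ I t₀ hγ hspan
end
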